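/- arXiv:2603.13671 — 4 statements merged into one kernel-verified Lean document; each statement's English description precedes it below -/
import Mathlib

section
/- Chain Redemption. Let C be a configuration, let p_0, p_1, ..., p_k (k ≥ 1) be pairwise distinct agents, and let d_0, ..., d_{k-1} ∈ ℕ satisfy d_i ≤ C(p_0).date for every 0 ≤ i < k, such that for each 0 ≤ i < k the holdings C(p_i).holdings contain the bond (p_{i+1}, d_i). Then there exists a sequence of k−1 Redeem transactions, each with redeemer p_0, leading from C to a configuration C' in which C'(p_0).holdings contains a bond issued by p_k. -/
/-! Grassroots bonds framework.

Agents form a finite type `P` with decidable equality.  A bond is a pair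
(issuer, maturity) in `P × ℕ`.  The machine state of an agent is a multiset
of bonds (its holdings) together with a local date. -/

structure AgentState (P : Type*) where
  holdings : Multiset (P × ℕ)
  date : ℕ

/-- A configuration assigns a machine state to every agent. -/
abbrev Config (P : Type*) := P → AgentState P

/-- Labels of the grassroots bonds transactions. -/
inductive Tx (P : Type*) where
  | mint (p : P) (k d : ℕ)
  | advance (p : P) (d' : ℕ)
  | swap (p q : P) (x y : Multiset (P × ℕ))
  | pay (p q : P) (x : Multiset (P × ℕ))
  | redeem (p q : P) (x y : P × ℕ)

/-- The grassroots bonds transactions, relating a configuration `C` to a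
configuration `C'` that agrees with `C` on every agent not mentioned. -/
inductive TxStep {P : Type*} [DecidableEq P] : Tx P → Config P → Config P → Prop
  | mint {C : Config P} {p : P} {k d : ℕ} (hk : 0 < k) :
      TxStep (Tx.mint p k d) C
        (Function.update C p
          ⟨(C p).holdings + Multiset.replicate k (p, d), (C p).date⟩)
  | advance {C : Config P} {p : P} {d' : ℕ} (h : (C p).date < d') :
      TxStep (Tx.advance p d') C (Function.update C p ⟨(C p).holdings, d'⟩)
  | swap {C : Config P} {p q : P} {x y : Multiset (P × ℕ)} (hpq : p ≠ q)
      (hx : x ≤ (C p).holdings) (hy : y ≤ (C q).holdings) :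
      TxStep (Tx.swap p q x y) C
        (Function.update
          (Function.update C p ⟨(C p).holdings - x + y, (C p).date⟩) q
          ⟨(C q).holdings - y + x, (C q).date⟩)
  | pay {C : Config P} {p q : P} {x : Multiset (P × ℕ)} (hpq : p ≠ q)
      (hx : x ≤ (C p).holdings)
      (hcoins : ∀ b ∈ x, b.1 = q ∧ b.2 ≤ (C p).date) :
      TxStep (Tx.pay p q x) C
        (Function.update
          (Function.update C p ⟨(C p).holdings - x, (C p).date⟩) q
          ⟨(C q).holdings + x, (C q).date⟩)
  | redeem {C : Config P} {p q : P} {x y : P × ℕ} (hpq : p ≠ q) (hxq : x.1 = q)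
      (hxd : x.2 ≤ (C p).date) (hx : x ∈ (C p).holdings) (hy : y ∈ (C q).holdings) :
      TxStep (Tx.redeem p q x y) C
        (Function.update
          (Function.update C p ⟨(C p).holdings - {x} + {y}, (C p).date⟩) q
          ⟨(C q).holdings - {y} + {x}, (C q).date⟩)

/-- The initial configuration: every agent with empty holdings and date 0. -/
def initConfig {P : Type*} : Config P := fun _ => ⟨0, 0⟩

/-- The number of `p`-bonds in circulation in `C`. -/
def circulation {P : Type*} [DecidableEq P] [Fintype P] (C : Config P) (p : P) : ℕ :=
  ∑ q : P, ((C q).holdings.filter (fun b => b.1 = p)).card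

/-- **Chain Redemption.**  Let `C` be a configuration, `p 0, …, p k` (`k ≥ 1`)
pairwise distinct agents, and `d 0, …, d (k-1)` dates each at most the local
date of `p 0`, such that for each `i < k` the holdings of `p i` contain the
bond `(p (i+1), d i)`.  Then there is a sequence of `k − 1` Redeem
transactions, each with redeemer `p 0`, leading from `C` to a configuration
`C'` in which the holdings of `p 0` contain a bond issued by `p k`. -/
theorem chain_redemption {P : Type*} [DecidableEq P] (C : Config P) (k : ℕ)
    (hk : 1 ≤ k) (p : ℕ → P)
    (hdistinct : ∀ i j, i ≤ k → j ≤ k → p i = p j → i = j)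
    (d : ℕ → ℕ) (hd : ∀ i < k, d i ≤ (C (p 0)).date)
    (hhold : ∀ i < k, (p (i + 1), d i) ∈ (C (p i)).holdings) :
    ∃ Cs : ℕ → Config P, Cs 0 = C ∧
      (∀ i < k - 1, ∃ q x y, TxStep (Tx.redeem (p 0) q x y) (Cs i) (Cs (i + 1))) ∧
      ∃ dd : ℕ, (p k, dd) ∈ ((Cs (k - 1)) (p 0)).holdings := by
  classical
  set step : ℕ → Config P → Config P := fun i Ci =>
    Function.update (Function.update Ci (p 0)
      ⟨(Ci (p 0)).holdings - {(p (i+1), d i)} + {(p (i+2), d (i+1))}, (Ci (p 0)).date⟩)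
      (p (i+1))
      ⟨(Ci (p (i+1))).holdings - {(p (i+2), d (i+1))} + {(p (i+1), d i)},
        (Ci (p (i+1))).date⟩ with hstep
  set Cs : ℕ → Config P :=
    fun n => Nat.rec C (fun i Ci => if i < k - 1 then step i Ci else Ci) n with hCs
  have hCs0 : Cs 0 = C := rfl
  have hCsSucc : ∀ i, i < k - 1 → Cs (i+1) = step i (Cs i) := by
    intro i h; simp only [hCs]; simp [h]
  have inv : ∀ i, i ≤ k - 1 →
      ((Cs i (p 0)).date = (C (p 0)).date ∧
       (p (i+1), d i) ∈ (Cs i (p 0)).holdings ∧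
       ∀ j, i + 1 ≤ j → j ≤ k → Cs i (p j) = C (p j)) := by
    intro i
    induction i with
    | zero => exact fun _ => ⟨rfl, hhold 0 hk, fun _ _ _ => rfl⟩
    | succ i ih =>
      intro hi
      have hi' : i < k - 1 := lt_of_lt_of_le (Nat.lt_succ_self i) hi
      obtain ⟨hdate, hmem, hsame⟩ := ih (le_of_lt hi')
      have hne : p 0 ≠ p (i+1) := fun h => by
        have := hdistinct 0 (i+1) (Nat.zero_le _) (by omega) h; omega
      rw [hCsSucc i hi']
      refine ⟨?_, ?_, ?_⟩
      · simp only [hstep, Function.update_apply, if_neg hne, if_pos rfl]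
        exact hdate
      · simp only [hstep, Function.update_apply, if_neg hne, if_pos rfl]
        exact Multiset.mem_add.mpr (Or.inr (Multiset.mem_singleton.mpr rfl))
      · intro j hj1 hjk
        have hj0 : p j ≠ p 0 := fun h => by
          have := hdistinct j 0 hjk (Nat.zero_le _) h; omega
        have hji : p j ≠ p (i+1) := fun h => by
          have := hdistinct j (i+1) hjk (by omega) h; omega
        simp only [hstep, Function.update_apply, if_neg hji, if_neg hj0]
        exact hsame j (by omega) hjk
  refine ⟨Cs, hCs0, ?_, ?_⟩
  · intro i hi
    obtain ⟨hdate, hmem, hsame⟩ := inv i (le_of_lt hi)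
    have hne : p 0 ≠ p (i+1) := fun h => by
      have := hdistinct 0 (i+1) (Nat.zero_le _) (by omega) h; omega
    refine ⟨p (i+1), (p (i+1), d i), (p (i+2), d (i+1)), ?_⟩
    rw [hCsSucc i hi]
    exact TxStep.redeem hne rfl (hdate ▸ hd i (by omega)) hmem
      ((hsame (i+1) le_rfl (by omega)) ▸ hhold (i+1) (by omega))
  · obtain ⟨_, hmem, _⟩ := inv (k - 1) le_rfl
    have hk1 : k - 1 + 1 = k := by omega
    exact ⟨d (k-1), hk1 ▸ hmem⟩
end

section
/- Strengthened Chain Redemption. Let C be a configuration, let p_0, p_1, ..., p_k (k ≥ 1) be pairwise distinct agents, and let d_0, ..., d_{k-1} ∈ ℕ satisfy d_i ≤ C(p_0).date for every 0 ≤ i < k, such that for each 0 ≤ i < k the holdings C(p_i).holdings contain the bond (p_{i+1}, d_i). Then there exists a sequence of k−1 Redeem transactions, each with redeemer p_0, leading from C to a configuration C' such that: C'(p_0).holdings contains the bond (p_k, d_{k-1}); for each 1 ≤ i ≤ k−1, C'(p_i).holdings contains the bond (p_i, d_{i-1}); and for every agent q the number of q-bonds in circulation in C' equals the number of q-bonds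 in circulation in C. -/
private lemma filter_card_swap {P : Type*} [DecidableEq P]
    (A B : Multiset (P × ℕ)) (x y : P × ℕ) (hx : x ∈ A) (hy : y ∈ B) (r : P) :
    ((A - {x} + {y}).filter (fun b => b.1 = r)).card
      + ((B - {y} + {x}).filter (fun b => b.1 = r)).card
    = (A.filter (fun b => b.1 = r)).card + (B.filter (fun b => b.1 = r)).card := by
  have h1 : A - {x} + {x} = A :=
    tsub_add_cancel_of_le (Multiset.singleton_le.mpr hx)
  have h2 : B - {y} + {y} = B :=
    tsub_add_cancel_of_le (Multiset.singleton_le.mpr hy)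
  have key : (A - {x} + {y}) + (B - {y} + {x}) = A + B := by
    have : (A - {x} + {y}) + (B - {y} + {x})
        = (A - {x} + {x}) + (B - {y} + {y}) := by
      generalize A - {x} = A'
      generalize B - {y} = B'
      abel
    rw [this, h1, h2]
  have := congrArg (fun s => (Multiset.filter (fun b => b.1 = r) s).card) key
  simpa [Multiset.filter_add] using this

private lemma sum_update_two {P : Type*} [DecidableEq P] [Fintype P]
    (f : P → ℕ) (p q : P) (hpq : p ≠ q) (a b : ℕ) (hab : a + b = f p + f q) :
    ∑ z : P, Function.update (Function.update f p a) q b z = ∑ z : P, f z := by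
  rw [Finset.sum_update_of_mem (Finset.mem_univ q)]
  rw [Finset.sum_update_of_mem (by simp [hpq] : p ∈ Finset.univ \ {q})]
  have h1 : ∑ z : P, f z = f q + ∑ z ∈ Finset.univ \ {q}, f z :=
    (Finset.sum_eq_add_sum_sdiff_singleton_of_mem (Finset.mem_univ q) f)
  have h2 : ∑ z ∈ Finset.univ \ {q}, f z
      = f p + ∑ z ∈ (Finset.univ \ {q}) \ {p}, f z :=
    (Finset.sum_eq_add_sum_sdiff_singleton_of_mem (by simp [hpq]) f)
  omega

private lemma circulation_redeem_step {P : Type*} [DecidableEq P] [Fintype P]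
    (C : Config P) (p q : P) (hpq : p ≠ q) (x y : P × ℕ)
    (hx : x ∈ (C p).holdings) (hy : y ∈ (C q).holdings) (r : P) :
    circulation (Function.update
      (Function.update C p ⟨(C p).holdings - {x} + {y}, (C p).date⟩) q
      ⟨(C q).holdings - {y} + {x}, (C q).date⟩) r = circulation C r := by
  set g : AgentState P → ℕ := fun s => (s.holdings.filter (fun b => b.1 = r)).card with hg
  have hfun : (fun z => g ((Function.update
      (Function.update C p ⟨(C p).holdings - {x} + {y}, (C p).date⟩) q
      ⟨(C q).holdings - {y} + {x}, (C q).date⟩) z))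
      = Function.update (Function.update (fun z => g (C z)) p
          (g ⟨(C p).holdings - {x} + {y}, (C p).date⟩)) q
          (g ⟨(C q).holdings - {y} + {x}, (C q).date⟩) := by
    funext z
    by_cases hzq : z = q
    · subst hzq; simp [Function.update]
    · by_cases hzp : z = p
      · subst hzp; simp [Function.update, hzq]
      · simp [Function.update, hzq, hzp]
  show ∑ z : P, g _ = ∑ z : P, g (C z)
  rw [show (∑ z : P, g ((Function.update
      (Function.update C p ⟨(C p).holdings - {x} + {y}, (C p).date⟩) q
      ⟨(C q).holdings - {y} + {x}, (C q).date⟩) z)) = _ from congrArg Finset.univ.sum hfun]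
  exact sum_update_two _ p q hpq _ _ (by
    simpa [hg] using filter_card_swap (C p).holdings (C q).holdings x y hx hy r)

/-- **Strengthened Chain Redemption.**  Under the hypotheses of chain
redemption, there is a sequence of `k − 1` Redeem transactions, each with
redeemer `p 0`, leading from `C` to a configuration `C' = Cs (k-1)` such that:
`C'(p 0)` holds the bond `(p k, d (k-1))`; for each `1 ≤ i ≤ k-1`, `C'(p i)`
holds the bond `(p i, d (i-1))`; and the number of `q`-bonds in circulation is
unchanged for every agent `q`. -/
theorem strengthened_chain_redemption {P : Type*} [DecidableEq P] [Fintype P]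
    (C : Config P) (k : ℕ) (hk : 1 ≤ k) (p : ℕ → P)
    (hdistinct : ∀ i j, i ≤ k → j ≤ k → p i = p j → i = j)
    (d : ℕ → ℕ) (hd : ∀ i < k, d i ≤ (C (p 0)).date)
    (hhold : ∀ i < k, (p (i + 1), d i) ∈ (C (p i)).holdings) :
    ∃ Cs : ℕ → Config P, Cs 0 = C ∧
      (∀ i < k - 1, ∃ q x y, TxStep (Tx.redeem (p 0) q x y) (Cs i) (Cs (i + 1))) ∧
      (p k, d (k - 1)) ∈ ((Cs (k - 1)) (p 0)).holdings ∧
      (∀ i, 1 ≤ i → i ≤ k - 1 →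
        (p i, d (i - 1)) ∈ ((Cs (k - 1)) (p i)).holdings) ∧
      (∀ q : P, circulation (Cs (k - 1)) q = circulation C q) := by
  classical
  let x : ℕ → P × ℕ := fun i => (p (i + 1), d i)
  let step : ℕ → Config P → Config P := fun i D =>
    Function.update (Function.update D (p 0)
        ⟨(D (p 0)).holdings - {x i} + {x (i + 1)}, (D (p 0)).date⟩) (p (i + 1))
      ⟨(D (p (i + 1))).holdings - {x (i + 1)} + {x i}, (D (p (i + 1))).date⟩
  let Cs : ℕ → Config P := fun n =>
    Nat.rec C (fun i D => if i < k - 1 then step i D else D) n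
  have hCsSucc : ∀ i, i < k - 1 → Cs (i + 1) = step i (Cs i) := by
    intro i h
    show (if i < k - 1 then step i (Cs i) else Cs i) = step i (Cs i)
    rw [if_pos h]
  have inv : ∀ i, i ≤ k - 1 →
      (∀ q, (Cs i q).date = (C q).date) ∧
      x i ∈ (Cs i (p 0)).holdings ∧
      (∀ j, 1 ≤ j → j ≤ i → (p j, d (j - 1)) ∈ (Cs i (p j)).holdings) ∧
      (∀ j, i < j → j ≤ k → (Cs i (p j)).holdings = (C (p j)).holdings) ∧
      (∀ r, circulation (Cs i) r = circulation C r) := by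
    intro i
    induction i with
    | zero =>
      intro _
      exact ⟨fun q => rfl, hhold 0 (by omega), fun j h1 h2 => by omega,
        fun j _ _ => rfl, fun r => rfl⟩
    | succ i ih =>
      intro hik
      have hlt : i < k - 1 := by omega
      obtain ⟨hdate, hx0, hmid, hrest, hcirc⟩ := ih (by omega)
      have hne : p 0 ≠ p (i + 1) := fun h => by
        have := hdistinct 0 (i + 1) (by omega) (by omega) h; omega
      have hy : x (i + 1) ∈ (Cs i (p (i + 1))).holdings := by
        rw [hrest (i + 1) (by omega) (by omega)]
        exact hhold (i + 1) (by omega)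
      rw [hCsSucc i hlt]
      have hD'0 : step i (Cs i) (p 0)
          = ⟨(Cs i (p 0)).holdings - {x i} + {x (i + 1)}, (Cs i (p 0)).date⟩ := by
        simp [step, Function.update, hne, (Ne.symm hne)]
      have hD'1 : step i (Cs i) (p (i + 1))
          = ⟨(Cs i (p (i + 1))).holdings - {x (i + 1)} + {x i},
              (Cs i (p (i + 1))).date⟩ := by
        simp [step, Function.update]
      have hD'other : ∀ q, q ≠ p 0 → q ≠ p (i + 1) → step i (Cs i) q = Cs i q := by
        intro q h0 h1
        simp [step, Function.update, h0, h1]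
      refine ⟨?_, ?_, ?_, ?_, ?_⟩
      · intro q
        by_cases h1 : q = p (i + 1)
        · subst h1; rw [hD'1]; exact hdate _
        · by_cases h0 : q = p 0
          · subst h0; rw [hD'0]; exact hdate _
          · rw [hD'other q h0 h1]; exact hdate q
      · rw [hD'0]
        simp
      · intro j h1 h2
        by_cases hj : j = i + 1
        · subst hj
          rw [hD'1]
          have : (p (i + 1), d (i + 1 - 1)) = x i := by
            simp [x]
          rw [this]
          simp
        · have hj0 : p j ≠ p 0 := fun h => by
            have := hdistinct j 0 (by omega) (by omega) h; omega
          have hj1 : p j ≠ p (i + 1) := fun h => by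
            have := hdistinct j (i + 1) (by omega) (by omega) h; omega
          rw [hD'other _ hj0 hj1]
          exact hmid j h1 (by omega)
      · intro j hj1 hj2
        have hj0 : p j ≠ p 0 := fun h => by
          have := hdistinct j 0 (by omega) (by omega) h; omega
        have hj1' : p j ≠ p (i + 1) := fun h => by
          have := hdistinct j (i + 1) (by omega) (by omega) h; omega
        rw [hD'other _ hj0 hj1']
        exact hrest j (by omega) hj2
      · intro r
        rw [show step i (Cs i) = _ from rfl]
        rw [circulation_redeem_step (Cs i) (p 0) (p (i + 1)) hne (x i) (x (i + 1)) hx0 hy r]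
        exact hcirc r
  obtain ⟨hdateF, hx0F, hmidF, _, hcircF⟩ := inv (k - 1) le_rfl
  have hstep : ∀ i < k - 1,
      TxStep (Tx.redeem (p 0) (p (i + 1)) (x i) (x (i + 1))) (Cs i) (Cs (i + 1)) := by
    intro i hi
    obtain ⟨hdate, hx0, _, hrest, _⟩ := inv i (by omega)
    have hne : p 0 ≠ p (i + 1) := fun h => by
      have := hdistinct 0 (i + 1) (by omega) (by omega) h; omega
    have hy : x (i + 1) ∈ (Cs i (p (i + 1))).holdings := by
      rw [hrest (i + 1) (by omega) (by omega)]
      exact hhold (i + 1) (by omega)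
    rw [hCsSucc i hi]
    exact TxStep.redeem hne rfl (by rw [hdate]; exact hd i (by omega)) hx0 hy
  have hxk : x (k - 1) = (p k, d (k - 1)) := by
    show (p (k - 1 + 1), d (k - 1)) = _
    rw [Nat.sub_add_cancel hk]
  refine ⟨Cs, rfl, fun i hi => ⟨_, _, _, hstep i hi⟩, ?_, hmidF, hcircF⟩
  rw [← hxk]
  exact hx0F
end

section
/- Conservation of Money. Let C_0, C_1, ..., C_n be a run of the grassroots bonds transactions. Then for every agent p and every index m ≤ n, the number of p-bonds in circulation in C_m equals the sum of the amounts k over all Mint(p, k, d) transactions taken among the first m steps of the run. -/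
/-- The amount contributed by transaction `tx` to the minted total of agent
`p`: `k` if `tx = Mint(p, k, d)` for some `d`, and `0` otherwise. -/
def mintAmount {P : Type*} [DecidableEq P] (p : P) : Tx P → ℕ
  | Tx.mint p' k _ => if p' = p then k else 0
  | _ => 0


section Aux

variable {P : Type*} [DecidableEq P] [Fintype P]

/-- weight of an agent state: number of p-bonds held. -/
def wt (p : P) (s : AgentState P) : ℕ := (s.holdings.filter (fun b => b.1 = p)).card

lemma circ_update (C : Config P) (a : P) (s : AgentState P) (p : P) :
    circulation (Function.update C a s) p
      = wt p s + ∑ q ∈ Finset.univ \ {a}, wt p (C q) := by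
  unfold circulation
  calc ∑ q : P, (((Function.update C a s q)).holdings.filter (fun b => b.1 = p)).card
      = ∑ q : P, Function.update (fun q => wt p (C q)) a (wt p s) q := by
        refine Finset.sum_congr rfl fun q _ => ?_
        exact Function.apply_update (fun _ t => wt p t) C a s q
    _ = wt p s + ∑ q ∈ Finset.univ \ {a}, wt p (C q) :=
        Finset.sum_update_of_mem (Finset.mem_univ a) _ _

lemma circ_split (C : Config P) (a : P) (p : P) :
    circulation C p = wt p (C a) + ∑ q ∈ Finset.univ \ {a}, wt p (C q) := by
  unfold circulation
  exact Finset.sum_eq_add_sum_sdiff_singleton_of_mem (Finset.mem_univ a) _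

lemma circ_update2 (C : Config P) (a b : P) (hab : a ≠ b) (sa sb : AgentState P) (p : P) :
    circulation (Function.update (Function.update C a sa) b sb) p
      = wt p sb + (wt p sa + ∑ q ∈ (Finset.univ \ {b}) \ {a}, wt p (C q)) := by
  rw [circ_update]
  congr 1
  calc ∑ q ∈ Finset.univ \ {b}, wt p (Function.update C a sa q)
      = ∑ q ∈ Finset.univ \ {b}, Function.update (fun q => wt p (C q)) a (wt p sa) q := by
        refine Finset.sum_congr rfl fun q _ => ?_
        exact Function.apply_update (fun _ t => wt p t) C a sa q
    _ = wt p sa + ∑ q ∈ (Finset.univ \ {b}) \ {a}, wt p (C q) :=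
        Finset.sum_update_of_mem (by simp [hab]) _ _

lemma circ_split2 (C : Config P) (a b : P) (hab : a ≠ b) (p : P) :
    circulation C p = wt p (C b) + (wt p (C a) + ∑ q ∈ (Finset.univ \ {b}) \ {a}, wt p (C q)) := by
  rw [circ_split C b p]
  congr 1
  exact Finset.sum_eq_add_sum_sdiff_singleton_of_mem (by simp [hab]) _

lemma wt_sub_add {p : P} {h x y : Multiset (P × ℕ)} (hx : x ≤ h) :
    wt p ⟨h - x + y, 0⟩ + wt p ⟨x, 0⟩ = wt p ⟨h, 0⟩ + wt p ⟨y, 0⟩ := by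
  unfold wt
  simp only [Multiset.filter_add, Multiset.card_add, Multiset.filter_sub]
  rw [Multiset.card_sub (Multiset.filter_le_filter _ hx)]
  have := Multiset.card_le_card (Multiset.filter_le_filter (fun b => b.1 = p) hx)
  omega

lemma circ_step {tx : Tx P} {C C' : Config P} (h : TxStep tx C C') (p : P) :
    circulation C' p = circulation C p + mintAmount p tx := by
  cases h with
  | @mint C a k d hk =>
      rw [circ_update, circ_split C a p]
      have : wt p (⟨(C a).holdings + Multiset.replicate k (a, d), (C a).date⟩ : AgentState P)
          = wt p (C a) + mintAmount p (Tx.mint a k d) := by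
        unfold wt mintAmount
        simp only [Multiset.filter_add, Multiset.card_add]
        congr 1
        by_cases hap : a = p
        · subst hap
          rw [Multiset.filter_eq_self.2 (fun b hb => by simp [Multiset.eq_of_mem_replicate hb])]
          simp
        · rw [Multiset.filter_eq_nil.2 (fun b hb => by simp [Multiset.eq_of_mem_replicate hb, hap])]
          simp [hap]
      omega
  | @advance C a d' hd =>
      rw [circ_update, circ_split C a p]
      simp [mintAmount, wt]
  | @swap C a b x y hab hx hy =>
      rw [circ_update2 C a b hab, circ_split2 C a b hab]
      have h1 := wt_sub_add (p := p) (y := y) hx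
      have h2 := wt_sub_add (p := p) (y := x) hy
      have e1 : wt p (⟨(C a).holdings - x + y, (C a).date⟩ : AgentState P)
          = wt p (⟨(C a).holdings - x + y, 0⟩ : AgentState P) := rfl
      have e2 : wt p (⟨(C b).holdings - y + x, (C b).date⟩ : AgentState P)
          = wt p (⟨(C b).holdings - y + x, 0⟩ : AgentState P) := rfl
      have e3 : wt p (C a) = wt p (⟨(C a).holdings, 0⟩ : AgentState P) := rfl
      have e4 : wt p (C b) = wt p (⟨(C b).holdings, 0⟩ : AgentState P) := rfl
      simp only [mintAmount, e1, e2, e3, e4] at *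
      omega
  | @pay C a b x hab hx hcoins =>
      rw [circ_update2 C a b hab, circ_split2 C a b hab]
      have h1 := wt_sub_add (p := p) (y := (0 : Multiset (P × ℕ))) hx
      have e1 : wt p (⟨(C a).holdings - x, (C a).date⟩ : AgentState P)
          = wt p (⟨(C a).holdings - x + 0, 0⟩ : AgentState P) := by simp [wt]
      have e2 : wt p (⟨(C b).holdings + x, (C b).date⟩ : AgentState P)
          = wt p (⟨(C b).holdings, 0⟩ : AgentState P) + wt p (⟨x, 0⟩ : AgentState P) := by
        simp [wt, Multiset.filter_add]
      have e3 : wt p (C a) = wt p (⟨(C a).holdings, 0⟩ : AgentState P) := rfl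
      have e4 : wt p (C b) = wt p (⟨(C b).holdings, 0⟩ : AgentState P) := rfl
      have h0 : wt p (⟨(0 : Multiset (P × ℕ)), 0⟩ : AgentState P) = 0 := by simp [wt]
      simp only [mintAmount, e1, e2, e3, e4, h0] at *
      omega
  | @redeem C a b x y hab hxq hxd hx hy =>
      rw [circ_update2 C a b hab, circ_split2 C a b hab]
      have h1 := wt_sub_add (p := p) (y := ({y} : Multiset (P × ℕ)))
        (Multiset.singleton_le.mpr hx)
      have h2 := wt_sub_add (p := p) (y := ({x} : Multiset (P × ℕ)))
        (Multiset.singleton_le.mpr hy)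
      have e1 : wt p (⟨(C a).holdings - {x} + {y}, (C a).date⟩ : AgentState P)
          = wt p (⟨(C a).holdings - {x} + {y}, 0⟩ : AgentState P) := rfl
      have e2 : wt p (⟨(C b).holdings - {y} + {x}, (C b).date⟩ : AgentState P)
          = wt p (⟨(C b).holdings - {y} + {x}, 0⟩ : AgentState P) := rfl
      have e3 : wt p (C a) = wt p (⟨(C a).holdings, 0⟩ : AgentState P) := rfl
      have e4 : wt p (C b) = wt p (⟨(C b).holdings, 0⟩ : AgentState P) := rfl
      simp only [mintAmount, e1, e2, e3, e4] at *
      omega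

end Aux

/-- **Conservation of Money.**  In a run `Cs 0, …, Cs n` of the grassroots
bonds transactions, for every agent `p` and every `m ≤ n`, the number of
`p`-bonds in circulation in `Cs m` equals the sum of the amounts `k` over all
`Mint(p, k, d)` transactions taken among the first `m` steps. -/
theorem conservation_of_money {P : Type*} [DecidableEq P] [Fintype P]
    (n : ℕ) (Cs : ℕ → Config P) (txs : ℕ → Tx P)
    (h0 : Cs 0 = initConfig)
    (hstep : ∀ i < n, TxStep (txs i) (Cs i) (Cs (i + 1))) :
    ∀ p : P, ∀ m ≤ n,
      circulation (Cs m) p = ∑ i ∈ Finset.range m, mintAmount p (txs i) := by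
  intro p m
  induction m with
  | zero => intro _; simp [h0, circulation, initConfig]
  | succ m ih =>
      intro hm
      have hmn : m < n := hm
      rw [Finset.sum_range_succ, ← ih (Nat.le_of_lt hmn),
        circ_step (hstep m hmn) p]
end

section
/- Community mutual credit liquidity. Let P be a finite type of agents with n ≥ 2 elements and let k > 0. There exists a run of the grassroots bonds transactions from the initial configuration consisting of: first, a Mint(p, (n−1)·k, 0) transaction for each agent p; then, for each unordered pair {p, q} of distinct agents, one Swap transaction in which p gives k copies of the bond (p, 0) and receives k copies of the bond (q, 0). In the final configuration of this run, every agent p holds exactly k bonds (q, 0) for each agent q ≠ p and holds no p-bonds; hence every agent holds exactly (n−1)·k bonds, all issued by other agents, and the total number of bonds held by agents other than their issuer is n·(n−1)·k. -/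
set_option linter.unusedSectionVars false
set_option linter.unusedVariables false
set_option linter.unreachableTactic false
set_option linter.unusedTactic false

section CMCAux

variable {P : Type*} [DecidableEq P] [Fintype P]

/-- Auxiliary: does a pair involve agent `p`? -/
def cmcInv (p : P) (pr : P × P) : Bool := decide (pr.1 = p ∨ pr.2 = p)

/-- Auxiliary: contribution of a processed swap pair to `p`'s holdings. -/
def cmcF (k : ℕ) (p : P) (pr : P × P) : Multiset (P × ℕ) :=
  if pr.1 = p then Multiset.replicate k (pr.2, 0)
  else if pr.2 = p then Multiset.replicate k (pr.1, 0) else 0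

/-- Auxiliary: holdings of `p` after the swaps in `S` have been processed. -/
def cmcHold (n k : ℕ) (p : P) (S : List (P × P)) : Multiset (P × ℕ) :=
  Multiset.replicate ((n - 1 - S.countP (cmcInv p)) * k) (p, 0) + (S.map (cmcF k p)).sum

/-- Auxiliary: the finset of ordered pairs to be swapped. -/
def cmcFr (r : P → ℕ) : Finset (P × P) := Finset.univ.filter fun pr => r pr.1 < r pr.2

lemma mem_cmcFr {r : P → ℕ} {pr : P × P} : pr ∈ cmcFr r ↔ r pr.1 < r pr.2 := by
  simp [cmcFr]

lemma cmcHold_nil (n k : ℕ) (p : P) :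
    cmcHold n k p [] = Multiset.replicate ((n - 1) * k) (p, 0) := by
  simp [cmcHold]

lemma cmcHold_append_other (n k : ℕ) (p : P) (S : List (P × P)) (c : P × P)
    (h1 : c.1 ≠ p) (h2 : c.2 ≠ p) : cmcHold n k p (S ++ [c]) = cmcHold n k p S := by
  unfold cmcHold
  rw [List.countP_append, List.map_append, List.sum_append]
  simp [cmcInv, cmcF, h1, h2]

lemma rep_le_cmcHold (n k : ℕ) (p : P) (S : List (P × P))
    (hc : S.countP (cmcInv p) + 1 ≤ n - 1) :
    Multiset.replicate k (p, 0) ≤ cmcHold n k p S := by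
  refine le_trans ?_ (Multiset.le_add_right _ _)
  rw [Multiset.replicate_le_replicate]
  calc k = 1 * k := (one_mul k).symm
  _ ≤ (n - 1 - S.countP (cmcInv p)) * k := Nat.mul_le_mul_right k (by omega)

lemma cmcHold_append_fst (n k : ℕ) (a b : P) (hab : a ≠ b) (S : List (P × P))
    (hc : S.countP (cmcInv a) + 1 ≤ n - 1) :
    cmcHold n k a (S ++ [(a, b)])
      = cmcHold n k a S - Multiset.replicate k (a, 0) + Multiset.replicate k (b, 0) := by
  unfold cmcHold
  rw [List.countP_append, List.map_append, List.sum_append]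
  have h1 : List.countP (cmcInv a) [(a, b)] = 1 := by simp [cmcInv]
  have hf : cmcF k a (a, b) = Multiset.replicate k (b, 0) := by simp [cmcF]
  set c := S.countP (cmcInv a) with hcdef
  have hrep : (n - 1 - c) * k = (n - 1 - (c + 1)) * k + k := by
    have h : n - 1 - c = (n - 1 - (c + 1)) + 1 := by omega
    rw [h]; ring
  rw [h1, hrep, Multiset.replicate_add]
  simp only [List.map_cons, List.map_nil, List.sum_cons, List.sum_nil, add_zero, hf]
  have key : ∀ (A B x y : Multiset (P × ℕ)), A + x + B - x + y = A + (B + y) := by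
    intro A B x y; rw [add_right_comm, add_tsub_cancel_right, add_assoc]
  exact (key _ _ _ _).symm

lemma cmcHold_append_snd (n k : ℕ) (a b : P) (hab : a ≠ b) (S : List (P × P))
    (hc : S.countP (cmcInv b) + 1 ≤ n - 1) :
    cmcHold n k b (S ++ [(a, b)])
      = cmcHold n k b S - Multiset.replicate k (b, 0) + Multiset.replicate k (a, 0) := by
  unfold cmcHold
  rw [List.countP_append, List.map_append, List.sum_append]
  have h1 : List.countP (cmcInv b) [(a, b)] = 1 := by simp [cmcInv]
  have hf : cmcF k b (a, b) = Multiset.replicate k (a, 0) := by simp [cmcF, hab]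
  set c := S.countP (cmcInv b) with hcdef
  have hrep : (n - 1 - c) * k = (n - 1 - (c + 1)) * k + k := by
    have h : n - 1 - c = (n - 1 - (c + 1)) + 1 := by omega
    rw [h]; ring
  rw [h1, hrep, Multiset.replicate_add]
  simp only [List.map_cons, List.map_nil, List.sum_cons, List.sum_nil, add_zero, hf]
  have key : ∀ (A B x y : Multiset (P × ℕ)), A + x + B - x + y = A + (B + y) := by
    intro A B x y; rw [add_right_comm, add_tsub_cancel_right, add_assoc]
  exact (key _ _ _ _).symm

lemma countP_take_lt {α : Type*} (l : List α) (pb : α → Bool) (s : ℕ) (h : s < l.length)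
    (hp : pb (l.get ⟨s, h⟩) = true) :
    (l.take s).countP pb + 1 ≤ l.countP pb := by
  have h1 : (l.take (s + 1)).countP pb = (l.take s).countP pb + 1 := by
    rw [← List.take_concat_get h, List.concat_eq_append, List.countP_append]
    simp [List.get_eq_getElem] at hp
    simp [hp]
  rw [← h1]
  exact (List.take_sublist _ _).countP_le

lemma card_filter_inv (r : P → ℕ) (hr : Function.Injective r) (p : P) :
    ((cmcFr r).filter (fun pr => pr.1 = p ∨ pr.2 = p)).card = Fintype.card P - 1 := by
  rw [← Finset.card_univ, ← Finset.card_erase_of_mem (Finset.mem_univ p)]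
  refine Finset.card_bij' (fun pr _ => if pr.1 = p then pr.2 else pr.1)
    (fun q _ => if r p < r q then (p, q) else (q, p)) ?_ ?_ ?_ ?_
  · rintro ⟨x, y⟩ hpr
    rw [Finset.mem_filter, mem_cmcFr] at hpr
    obtain ⟨hlt, hor⟩ := hpr
    dsimp only at hlt hor ⊢
    have hxy : x ≠ y := fun h => by rw [h] at hlt; exact lt_irrefl _ hlt
    by_cases hx : x = p
    · rw [if_pos hx]
      exact Finset.mem_erase.2 ⟨fun hy => hxy (hx.trans hy.symm), Finset.mem_univ _⟩
    · have hy : y = p := hor.resolve_left hx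
      rw [if_neg hx]
      exact Finset.mem_erase.2 ⟨hx, Finset.mem_univ _⟩
  · intro q hq
    have hqp : q ≠ p := (Finset.mem_erase.1 hq).1
    have hne : r q ≠ r p := fun h => hqp (hr h)
    split_ifs with h
    · rw [Finset.mem_filter, mem_cmcFr]; exact ⟨h, Or.inl rfl⟩
    · rw [Finset.mem_filter, mem_cmcFr]
      exact ⟨show r q < r p by omega, Or.inr rfl⟩
  · rintro ⟨x, y⟩ hpr
    rw [Finset.mem_filter, mem_cmcFr] at hpr
    obtain ⟨hlt, hor⟩ := hpr
    dsimp only at hlt hor ⊢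
    by_cases hx : x = p
    · subst hx
      rw [if_pos rfl, if_pos hlt]
    · have hy : y = p := hor.resolve_left hx
      subst hy
      rw [if_neg hx, if_neg (by omega : ¬ r y < r x)]
  · intro q hq
    have hqp : q ≠ p := (Finset.mem_erase.1 hq).1
    by_cases h : r p < r q
    · rw [if_pos h]; dsimp only; rw [if_pos rfl]
    · rw [if_neg h]; dsimp only; rw [if_neg hqp]

lemma countP_pl (r : P → ℕ) (hr : Function.Injective r) (p : P) :
    (cmcFr r).toList.countP (cmcInv p) = Fintype.card P - 1 := by
  have h1 : (cmcFr r).toList.countP (cmcInv p)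
      = Multiset.countP (fun pr : P × P => pr.1 = p ∨ pr.2 = p) ((cmcFr r).toList : Multiset (P × P)) := by
    rw [Multiset.coe_countP]
    rfl
  rw [h1, Finset.coe_toList, Multiset.countP_eq_card_filter]
  rw [← card_filter_inv r hr p]
  rfl

lemma count_final (r : P → ℕ) (hr : Function.Injective r) (k : ℕ) {p q : P} (hqp : q ≠ p) :
    Multiset.count (q, 0) (∑ pr ∈ cmcFr r, cmcF k p pr) = k := by
  have hne : r q ≠ r p := fun h => hqp (hr h)
  rw [Multiset.count_sum']
  by_cases hlt : r p < r q
  · have hc : (p, q) ∈ cmcFr r := mem_cmcFr.2 hlt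
    have hterm : ∀ pr ∈ cmcFr r,
        Multiset.count (q, 0) (cmcF k p pr) = if pr = (p, q) then k else 0 := by
      rintro ⟨x, y⟩ hpr
      have hxy : r x < r y := mem_cmcFr.1 hpr
      unfold cmcF
      dsimp only
      by_cases h1 : x = p
      · rw [if_pos h1, Multiset.count_replicate]
        by_cases hy : y = q
        · rw [if_pos (by rw [hy]), if_pos (by rw [h1, hy])]
        · rw [if_neg (fun h => hy (congrArg Prod.fst h)),
            if_neg (fun h => hy (congrArg Prod.snd h))]
      · rw [if_neg h1]
        by_cases h2 : y = p
        · rw [if_pos h2, Multiset.count_replicate]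
          have hx : x ≠ q := fun hx => absurd hxy (by rw [hx, h2]; omega)
          rw [if_neg (fun h => hx (congrArg Prod.fst h)),
            if_neg (fun h => h1 (congrArg Prod.fst h))]
        · rw [if_neg h2, if_neg (fun h => h1 (congrArg Prod.fst h)), Multiset.count_zero]
    rw [Finset.sum_congr rfl hterm, Finset.sum_ite_eq' (cmcFr r) ((p, q) : P × P) (fun _ => k),
      if_pos hc]
  · have hlt' : r q < r p := by omega
    have hc : (q, p) ∈ cmcFr r := mem_cmcFr.2 hlt'
    have hterm : ∀ pr ∈ cmcFr r,
        Multiset.count (q, 0) (cmcF k p pr) = if pr = (q, p) then k else 0 := by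
      rintro ⟨x, y⟩ hpr
      have hxy : r x < r y := mem_cmcFr.1 hpr
      unfold cmcF
      dsimp only
      by_cases h1 : x = p
      · rw [if_pos h1, Multiset.count_replicate]
        have hy : y ≠ q := fun hy => absurd hxy (by rw [h1, hy]; omega)
        have hxq : x ≠ q := fun h => hqp ((h ▸ h1 : q = p))
        rw [if_neg (fun h => hy (congrArg Prod.fst h)),
          if_neg (fun h => hxq (congrArg Prod.fst h))]
      · rw [if_neg h1]
        by_cases h2 : y = p
        · rw [if_pos h2, Multiset.count_replicate]
          by_cases hx : x = q
          · rw [if_pos (by rw [hx]), if_pos (by rw [hx, h2])]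
          · rw [if_neg (fun h => hx (congrArg Prod.fst h)),
              if_neg (fun h => hx (congrArg Prod.fst h))]
        · rw [if_neg h2, if_neg (fun h => h2 (congrArg Prod.snd h)), Multiset.count_zero]
    rw [Finset.sum_congr rfl hterm, Finset.sum_ite_eq' (cmcFr r) ((q, p) : P × P) (fun _ => k),
      if_pos hc]

lemma count_self_final (r : P → ℕ) (k : ℕ) (p : P) (dd : ℕ) :
    Multiset.count (p, dd) (∑ pr ∈ cmcFr r, cmcF k p pr) = 0 := by
  rw [Multiset.count_sum']
  refine Finset.sum_eq_zero ?_
  rintro ⟨x, y⟩ hpr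
  have hxy : r x < r y := mem_cmcFr.1 hpr
  have hxyne : x ≠ y := fun h => by rw [h] at hxy; exact lt_irrefl _ hxy
  unfold cmcF
  dsimp only
  by_cases h1 : x = p
  · rw [if_pos h1, Multiset.count_replicate,
      if_neg (fun h => hxyne (h1.trans (congrArg Prod.fst h).symm))]
  · rw [if_neg h1]
    by_cases h2 : y = p
    · rw [if_pos h2, Multiset.count_replicate,
        if_neg (fun h => h1 (congrArg Prod.fst h))]
    · rw [if_neg h2, Multiset.count_zero]

lemma card_final (r : P → ℕ) (hr : Function.Injective r) (k : ℕ) (p : P) :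
    Multiset.card (∑ pr ∈ cmcFr r, cmcF k p pr) = (Fintype.card P - 1) * k := by
  have hcard : Multiset.card (∑ pr ∈ cmcFr r, cmcF k p pr)
      = ∑ pr ∈ cmcFr r, Multiset.card (cmcF k p pr) :=
    map_sum (⟨⟨Multiset.card, Multiset.card_zero⟩, Multiset.card_add⟩ :
      Multiset (P × ℕ) →+ ℕ) _ _
  rw [hcard]
  have hterm : ∀ pr ∈ cmcFr r,
      Multiset.card (cmcF k p pr) = if pr.1 = p ∨ pr.2 = p then k else 0 := by
    intro pr _
    unfold cmcF
    split_ifs <;> simp_all [Multiset.card_replicate] <;> tauto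
  rw [Finset.sum_congr rfl hterm, ← Finset.sum_filter, Finset.sum_const, smul_eq_mul,
    card_filter_inv r hr p]

end CMCAux

/-- **Community mutual credit liquidity.**  Let `P` have `n ≥ 2` agents and
let `k > 0`.  There is a run from the initial configuration consisting of a
`Mint(p, (n-1)·k, 0)` transaction for each agent `p` (one per agent, in some
order given by a bijection `e`), followed by one Swap per unordered pair
`{p, q}` of distinct agents in which `p` gives `k` copies of `(p, 0)` and
receives `k` copies of `(q, 0)`.  In the final configuration every agent `p`
holds exactly `k` bonds `(q, 0)` for each `q ≠ p` and no `p`-bonds; hence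
every agent holds exactly `(n-1)·k` bonds, all issued by other agents, and
the total number of bonds held by agents other than their issuer is
`n·(n-1)·k`. -/
theorem community_mutual_credit {P : Type*} [DecidableEq P] [Fintype P]
    (n k : ℕ) (hn : n = Fintype.card P) (hn2 : 2 ≤ n) (hk : 0 < k) :
    ∃ (m : ℕ) (Cs : ℕ → Config P) (txs : ℕ → Tx P) (e : Fin n ≃ P)
      (pairs : Fin m → P × P),
      Cs 0 = initConfig ∧
      (∀ i < n + m, TxStep (txs i) (Cs i) (Cs (i + 1))) ∧
      (∀ i : Fin n, txs (i : ℕ) = Tx.mint (e i) ((n - 1) * k) 0) ∧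
      (∀ j : Fin m, (pairs j).1 ≠ (pairs j).2 ∧
        txs (n + (j : ℕ)) = Tx.swap (pairs j).1 (pairs j).2
          (Multiset.replicate k ((pairs j).1, 0))
          (Multiset.replicate k ((pairs j).2, 0))) ∧
      (∀ p q : P, p ≠ q → ∃! j : Fin m, pairs j = (p, q) ∨ pairs j = (q, p)) ∧
      (∀ p q : P, q ≠ p → ((Cs (n + m)) p).holdings.count (q, 0) = k) ∧
      (∀ p : P, ∀ dd : ℕ, (p, dd) ∉ ((Cs (n + m)) p).holdings) ∧
      (∀ p : P, Multiset.card ((Cs (n + m)) p).holdings = (n - 1) * k) ∧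
      (∑ p : P, (((Cs (n + m)) p).holdings.filter (fun b => b.1 ≠ p)).card)
        = n * (n - 1) * k := by
  classical
  let e : Fin n ≃ P := (finCongr hn).trans (Fintype.equivFin P).symm
  set r : P → ℕ := fun p => ((Fintype.equivFin P) p : ℕ) with hrdef
  have hr : Function.Injective r := fun p q h =>
    (Fintype.equivFin P).injective (Fin.val_injective h)
  have hrn : ∀ p, r p < n := fun p => by rw [hn]; exact ((Fintype.equivFin P) p).isLt
  have her : ∀ (i : ℕ) (h : i < n), r (e ⟨i, h⟩) = i := by
    intro i h
    show ((Fintype.equivFin P) ((Fintype.equivFin P).symm (finCongr hn ⟨i, h⟩)) : ℕ) = i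
    rw [Equiv.apply_symm_apply]
    rfl
  set pl : List (P × P) := (cmcFr r).toList with hpl
  have hnd : pl.Nodup := Finset.nodup_toList _
  have hmem : ∀ pr : P × P, pr ∈ pl ↔ r pr.1 < r pr.2 := fun pr => by
    rw [hpl, Finset.mem_toList, mem_cmcFr]
  have hcount : ∀ p : P, pl.countP (cmcInv p) = n - 1 := fun p => by
    rw [hpl, countP_pl r hr p, hn]
  set Cs : ℕ → Config P := fun t p =>
    ⟨if t < n then (if r p < t then Multiset.replicate ((n - 1) * k) (p, 0) else 0)
      else cmcHold n k p (pl.take (t - n)), 0⟩ with hCs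
  set txs : ℕ → Tx P := fun i =>
    if h : i < n then Tx.mint (e ⟨i, h⟩) ((n - 1) * k) 0
    else if h2 : i - n < pl.length then
      Tx.swap (pl.get ⟨i - n, h2⟩).1 (pl.get ⟨i - n, h2⟩).2
        (Multiset.replicate k ((pl.get ⟨i - n, h2⟩).1, 0))
        (Multiset.replicate k ((pl.get ⟨i - n, h2⟩).2, 0))
    else Tx.advance (e ⟨0, by omega⟩) 1 with htxs
  have hfinal : ∀ p : P, ((Cs (n + pl.length)) p).holdings = ∑ pr ∈ cmcFr r, cmcF k p pr := by
    intro p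
    rw [hCs]
    dsimp only
    rw [if_neg (by omega : ¬ n + pl.length < n)]
    have h1 : n + pl.length - n = pl.length := by omega
    rw [h1, List.take_length]
    unfold cmcHold
    rw [hcount p, Nat.sub_self, zero_mul, Multiset.replicate_zero, zero_add, hpl]
    exact Finset.sum_map_toList _ _
  refine ⟨pl.length, Cs, txs, e, fun j => pl.get j, ?_, ?_, ?_, ?_, ?_, ?_, ?_, ?_, ?_⟩
  · funext p
    rw [hCs]
    dsimp only
    rw [if_pos (by omega : (0:ℕ) < n), if_neg (by omega : ¬ r p < 0)]
    rfl
  · intro i hi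
    by_cases hin : i < n
    · have hk' : 0 < (n - 1) * k := Nat.mul_pos (by omega) hk
      set a := e ⟨i, hin⟩ with hadef
      have hra : r a = i := her i hin
      have hupd : Cs (i + 1) = Function.update (Cs i) a
          ⟨(Cs i a).holdings + Multiset.replicate ((n - 1) * k) (a, 0), (Cs i a).date⟩ := by
        funext p
        rw [hCs]
        dsimp only
        by_cases hp : p = a
        · subst hp
          rw [Function.update_self, if_pos hin, if_neg (by omega : ¬ r a < i)]
          by_cases hi1 : i + 1 < n
          · rw [if_pos hi1, if_pos (by omega : r a < i + 1), zero_add]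
          · rw [if_neg hi1]
            have h0 : i + 1 - n = 0 := by omega
            rw [h0, List.take_zero, cmcHold_nil, zero_add]
        · rw [Function.update_of_ne hp]
          have hrp : r p ≠ i := fun h => hp (hr (h.trans hra.symm))
          rw [if_pos hin]
          by_cases hi1 : i + 1 < n
          · rw [if_pos hi1]
            by_cases h2 : r p < i
            · rw [if_pos h2, if_pos (by omega : r p < i + 1)]
            · rw [if_neg h2, if_neg (by omega : ¬ r p < i + 1)]
          · rw [if_neg hi1]
            have h0 : i + 1 - n = 0 := by omega
            rw [h0, List.take_zero, cmcHold_nil, if_pos (by have := hrn p; omega : r p < i)]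
      rw [htxs]
      dsimp only
      rw [dif_pos hin, hupd]
      exact TxStep.mint hk'
    · have hs : i - n < pl.length := by omega
      set c := pl.get ⟨i - n, hs⟩ with hcdef
      have hcmem : c ∈ pl := List.get_mem pl _
      have hab : c.1 ≠ c.2 := by
        have h := (hmem c).1 hcmem
        intro hh; rw [hh] at h; exact lt_irrefl _ h
      have hca : (pl.take (i - n)).countP (cmcInv c.1) + 1 ≤ n - 1 := by
        have h := countP_take_lt pl (cmcInv c.1) (i - n) hs
          (by rw [← hcdef]; simp [cmcInv])
        rw [hcount] at h; exact h
      have hcb : (pl.take (i - n)).countP (cmcInv c.2) + 1 ≤ n - 1 := by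
        have h := countP_take_lt pl (cmcInv c.2) (i - n) hs
          (by rw [← hcdef]; simp [cmcInv])
        rw [hcount] at h; exact h
      have hholds : ∀ p, (Cs i p).holdings = cmcHold n k p (pl.take (i - n)) := by
        intro p; rw [hCs]; dsimp only; rw [if_neg hin]
      have hx : Multiset.replicate k (c.1, 0) ≤ (Cs i c.1).holdings := by
        rw [hholds]; exact rep_le_cmcHold n k c.1 _ hca
      have hy : Multiset.replicate k (c.2, 0) ≤ (Cs i c.2).holdings := by
        rw [hholds]; exact rep_le_cmcHold n k c.2 _ hcb
      have htake : pl.take (i + 1 - n) = pl.take (i - n) ++ [(c.1, c.2)] := by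
        have h1 : i + 1 - n = (i - n) + 1 := by omega
        rw [h1, ← List.take_concat_get hs, List.concat_eq_append]
        rfl
      have hupd : Cs (i + 1) = Function.update (Function.update (Cs i) c.1
          ⟨(Cs i c.1).holdings - Multiset.replicate k (c.1, 0)
            + Multiset.replicate k (c.2, 0), (Cs i c.1).date⟩) c.2
          ⟨(Cs i c.2).holdings - Multiset.replicate k (c.2, 0)
            + Multiset.replicate k (c.1, 0), (Cs i c.2).date⟩ := by
        funext p
        by_cases hpb : p = c.2
        · subst hpb
          rw [Function.update_self, hCs]
          dsimp only
          rw [if_neg (by omega : ¬ i + 1 < n), if_neg hin, htake,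
            cmcHold_append_snd n k c.1 c.2 hab _ hcb]
        · rw [Function.update_of_ne hpb]
          by_cases hpa : p = c.1
          · subst hpa
            rw [Function.update_self, hCs]
            dsimp only
            rw [if_neg (by omega : ¬ i + 1 < n), if_neg hin, htake,
              cmcHold_append_fst n k c.1 c.2 hab _ hca]
          · rw [Function.update_of_ne hpa, hCs]
            dsimp only
            rw [if_neg (by omega : ¬ i + 1 < n), if_neg hin, htake,
              cmcHold_append_other n k p _ (c.1, c.2)
                (fun h => hpa h.symm) (fun h => hpb h.symm)]
      rw [htxs]
      dsimp only
      rw [dif_neg hin, dif_pos hs, ← hcdef, hupd]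
      exact TxStep.swap hab hx hy
  · intro i
    rw [htxs]
    dsimp only
    rw [dif_pos i.isLt]
  · intro j
    constructor
    · intro h
      have hm := (hmem _).1 (List.get_mem pl j)
      rw [h] at hm
      exact lt_irrefl _ hm
    · rw [htxs]
      dsimp only
      rw [dif_neg (by omega : ¬ n + (j : ℕ) < n)]
      have h2 : n + (j : ℕ) - n < pl.length := by have := j.isLt; omega
      rw [dif_pos h2]
      have h3 : (⟨n + (j : ℕ) - n, h2⟩ : Fin pl.length) = j := by
        apply Fin.ext
        show n + (j : ℕ) - n = (j : ℕ)
        omega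
      rw [h3]
  · intro p q hpq
    have hne : r p ≠ r q := fun h => hpq (hr h)
    by_cases hlt : r p < r q
    · have hcmem : (p, q) ∈ pl := (hmem _).2 hlt
      obtain ⟨j, hj⟩ := List.mem_iff_get.1 hcmem
      refine ⟨j, Or.inl hj, ?_⟩
      intro j' hj'
      have hmem' := (hmem _).1 (List.get_mem pl j')
      have h1 : pl.get j' = (p, q) := by
        rcases hj' with h | h
        · exact h
        · exfalso
          rw [show pl.get j' = (q, p) from h] at hmem'
          have h' : r q < r p := hmem'
          omega
      exact List.nodup_iff_injective_get.1 hnd (h1.trans hj.symm)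
    · have hlt' : r q < r p := by omega
      have hcmem : (q, p) ∈ pl := (hmem _).2 hlt'
      obtain ⟨j, hj⟩ := List.mem_iff_get.1 hcmem
      refine ⟨j, Or.inr hj, ?_⟩
      intro j' hj'
      have hmem' := (hmem _).1 (List.get_mem pl j')
      have h1 : pl.get j' = (q, p) := by
        rcases hj' with h | h
        · exfalso
          rw [show pl.get j' = (p, q) from h] at hmem'
          have h' : r p < r q := hmem'
          omega
        · exact h
      exact List.nodup_iff_injective_get.1 hnd (h1.trans hj.symm)
  · intro p q hqp
    rw [hfinal p]
    exact count_final r hr k hqp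
  · intro p dd
    refine Multiset.count_eq_zero.1 ?_
    rw [hfinal p]
    exact count_self_final r k p dd
  · intro p
    rw [hfinal p, card_final r hr k p, hn]
  · have hall : ∀ p : P, (((Cs (n + pl.length)) p).holdings.filter (fun b => b.1 ≠ p))
        = ((Cs (n + pl.length)) p).holdings := by
      intro p
      refine Multiset.filter_eq_self.2 ?_
      rintro ⟨x, d⟩ hb
      intro hxp
      rw [hfinal p] at hb
      have h0 := count_self_final r k p d
      rw [show x = p from hxp] at hb
      exact Multiset.count_eq_zero.1 h0 hb
    calc (∑ p : P, (((Cs (n + pl.length)) p).holdings.filter (fun b => b.1 ≠ p)).card)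
        = ∑ _p : P, (n - 1) * k := by
          refine Finset.sum_congr rfl fun p _ => ?_
          rw [hall p, hfinal p, card_final r hr k p, hn]
      _ = n * ((n - 1) * k) := by
          rw [Finset.sum_const, Finset.card_univ, ← hn, smul_eq_mul]
      _ = n * (n - 1) * k := by ring
end
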